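/- Let R be a commutative noetherian ring, S a left noetherian ring which is an R-algebra, and K, J ideals of R. Let L be an R-elementary S-module with p := Ann_R(L), and let E be an injective S-module containing L as an essential S-submodule (i.e., E is an injective hull of L). Then: (a) if p ∈ W(K,J), then Γ_{K,J}(E) = E; (b) if p ∉ W(K,J), then Γ_{K,J}(E) = 0; and (c) if m is a maximal ideal of R with p ⊄ m, then the localization E_m of E (as an R-module) at m is zero. -/

import Mathlib

/-- Annihilator in `R` of an `S`-submodule, `R` acting through `algebraMap R S`. -/
def annRS (R : Type*) {S M : Type*} [CommRing R] [Ring S] [Algebra R S]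
    [AddCommGroup M] [Module S M] (N : Submodule S M) : Ideal R where
  carrier := {r : R | ∀ x ∈ N, algebraMap R S r • x = 0}
  zero_mem' := by intro x _; simp
  add_mem' := by
    intro a b ha hb x hx
    rw [map_add, add_smul, ha x hx, hb x hx, add_zero]
  smul_mem' := by
    intro c a ha x hx
    rw [smul_eq_mul, map_mul, mul_smul, ha x hx, smul_zero]

/-- An `R`-elementary object: nonzero, finitely generated, and the `R`-annihilator of
every nonzero subobject equals a fixed prime ideal `p` of `R`. -/
def IsRElem (R : Type*) {S M : Type*} [CommRing R] [Ring S] [Algebra R S]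
    [AddCommGroup M] [Module S M] (L : Submodule S M) : Prop :=
  L ≠ ⊥ ∧ L.FG ∧ ∃ p : Ideal R, p.IsPrime ∧
    ∀ L' : Submodule S M, L' ≤ L → L' ≠ ⊥ → annRS R L' = p
/-- `Γ_{I,J}` of a module. -/
def gammaIJ (R S : Type*) [CommRing R] [Ring S] [Algebra R S] (I J : Ideal R)
    (M : Type*) [AddCommGroup M] [Module S M] : Submodule S M :=
  sSup {N : Submodule S M | N.FG ∧ ∃ n, 1 ≤ n ∧ I ^ n ≤ annRS R N ⊔ J}

/-- `W(I,J)`, the nonclosed support attached to the pair of ideals `(I,J)`. -/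
def WIJ {R : Type*} [CommRing R] (I J : Ideal R) : Set (Ideal R) :=
  {p | p.IsPrime ∧ ∃ n, 1 ≤ n ∧ I ^ n ≤ p ⊔ J}

/-!
Since `L` is essential in `E` and `S` is left noetherian, every `r ∈ p = Ann_R(L)` acts locally
nilpotently on `E`: the kernels of the powers of `r` stabilise on each cyclic module `S x`, and
if `r ^ n • x ≠ 0` then `S (r ^ n • x)` meets `L`. Hence `p ⊆ √Ann_R(S x)` for every `x`, so
each cyclic submodule lies in `Γ_{K,J}(E)` when `p ∈ W(K,J)`, and `E_m = 0` when some `r ∈ p`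
lies outside `m`. Conversely every nonzero submodule `N` meets `L`, so
`Ann_R(N) ⊆ Ann_R(L ∩ N) = p`, which rules out nonzero submodules of `Γ_{K,J}(E)` when
`p ∉ W(K,J)`.
-/

open Submodule

theorem Ideal.exists_pow_le_sup_of_le_radical {R : Type*} [CommRing R] [IsNoetherianRing R]
    {K I I' J : Ideal R} (hI : I ≤ I'.radical) {n : ℕ} (hn : 1 ≤ n) (hK : K ^ n ≤ I ⊔ J) :
    ∃ m, 1 ≤ m ∧ K ^ m ≤ I' ⊔ J := by
  have hrad : K ^ n ≤ (I' ⊔ J).radical :=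
    hK.trans <| sup_le (hI.trans (Ideal.radical_mono le_sup_left))
      (le_sup_right.trans Ideal.le_radical)
  obtain ⟨t, ht⟩ := Ideal.exists_pow_le_of_le_radical_of_fg hrad (IsNoetherian.noetherian _)
  refine ⟨n * (t + 1), Nat.mul_pos hn t.succ_pos, ?_⟩
  rw [pow_mul]
  exact (Ideal.pow_le_pow_right t.le_succ).trans ht

theorem Module.End.exists_pow_apply_eq_zero_of_essential {S M : Type*} [Ring S]
    [IsNoetherianRing S] [AddCommGroup M] [Module S M] {L : Submodule S M}
    (hL : ∀ N : Submodule S M, N ≠ ⊥ → L ⊓ N ≠ ⊥) (f : Module.End S M)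
    (hf : L ≤ LinearMap.ker f) (x : M) : ∃ n, (f ^ n) x = 0 := by
  let N := span S {x}
  obtain ⟨n, hn : ∀ m, n ≤ m →
      (f.iterateKer n).comap N.subtype = (f.iterateKer m).comap N.subtype⟩ :=
    monotone_stabilizes_iff_noetherian.mpr
      (isNoetherian_of_fg_of_noetherian N (fg_span_singleton x))
      ⟨fun n ↦ (f.iterateKer n).comap N.subtype, fun _ _ h ↦ comap_mono (f.iterateKer.monotone h)⟩
  refine ⟨n, by_contra fun hx ↦ ?_⟩
  obtain ⟨y, hy, hy0⟩ :=
    (Submodule.ne_bot_iff _).mp (hL (span S {(f ^ n) x}) (by simpa [span_singleton_eq_bot]))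
  obtain ⟨hyL, hyx⟩ := mem_inf.mp hy
  obtain ⟨s, rfl⟩ := mem_span_singleton.mp hyx
  -- `f ^ (n + 1)` kills `s • x` since `f (s • f ^ n x) = 0`, hence so does `f ^ n` by stability.
  have hsx : (⟨s • x, smul_mem _ s (mem_span_singleton_self x)⟩ : N) ∈
      (f.iterateKer (n + 1)).comap N.subtype := by
    simpa [pow_succ', Module.End.mul_apply] using hf hyL
  rw [← hn (n + 1) n.le_succ] at hsx
  exact hy0 (by simpa using hsx)

section Annihilator

variable {R S E : Type*} [CommRing R] [Ring S] [Algebra R S] [AddCommGroup E] [Module S E]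

theorem annRS_anti {N N' : Submodule S E} (h : N ≤ N') : annRS R N' ≤ annRS R N :=
  fun _ hr x hx ↦ hr x (h hx)

theorem IsRElem.isPrime_annRS {L : Submodule S E} (hL : IsRElem R L) : (annRS R L).IsPrime := by
  obtain ⟨hL0, -, p, hp, hann⟩ := hL
  exact hann L le_rfl hL0 ▸ hp

theorem IsRElem.annRS_le_of_essential {L : Submodule S E} (hL : IsRElem R L)
    (hess : ∀ N : Submodule S E, N ≠ ⊥ → L ⊓ N ≠ ⊥) {N : Submodule S E} (hN : N ≠ ⊥) :
    annRS R N ≤ annRS R L := by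
  obtain ⟨hL0, -, p, -, hann⟩ := hL
  rw [hann L le_rfl hL0, ← hann (L ⊓ N) inf_le_left (hess N hN)]
  exact annRS_anti inf_le_right

variable [Module R E] [IsScalarTower R S E]

theorem mem_annRS_iff {N : Submodule S E} {r : R} : r ∈ annRS R N ↔ ∀ x ∈ N, r • x = 0 :=
  forall₂_congr fun x _ ↦ by rw [algebraMap_smul]

theorem mem_annRS_span_singleton_iff {x : E} {r : R} : r ∈ annRS R (span S {x}) ↔ r • x = 0 := by
  refine mem_annRS_iff.trans ⟨fun h ↦ h x (mem_span_singleton_self x), fun h y hy ↦ ?_⟩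
  obtain ⟨s, rfl⟩ := mem_span_singleton.mp hy
  rw [smul_comm, h, smul_zero]

theorem exists_pow_smul_eq_zero_of_essential [IsNoetherianRing S] {L : Submodule S E}
    (hess : ∀ N : Submodule S E, N ≠ ⊥ → L ⊓ N ≠ ⊥) {r : R} (hr : r ∈ annRS R L) (x : E) :
    ∃ n, r ^ n • x = 0 := by
  obtain ⟨n, hn⟩ := (Module.toModuleEnd (S := R) S E r).exists_pow_apply_eq_zero_of_essential
    hess (fun y hy ↦ mem_annRS_iff.mp hr y hy) x
  exact ⟨n, by rwa [← map_pow, Module.toModuleEnd_apply, DistribSMul.toLinearMap_apply] at hn⟩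

theorem annRS_le_radical_annRS_span_singleton_of_essential [IsNoetherianRing S]
    {L : Submodule S E} (hess : ∀ N : Submodule S E, N ≠ ⊥ → L ⊓ N ≠ ⊥) (x : E) :
    annRS R L ≤ (annRS R (span S {x})).radical := fun _ hr ↦
  let ⟨n, hn⟩ := exists_pow_smul_eq_zero_of_essential hess hr x
  ⟨n, mem_annRS_span_singleton_iff.mpr hn⟩

end Annihilator

theorem gammaIJ_injective_hull_of_elementary_general
    (R S E : Type*) [CommRing R] [IsNoetherianRing R] [Ring S] [IsNoetherianRing S]
    [Algebra R S] [AddCommGroup E] [Module S E] [Module R E] [IsScalarTower R S E]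
    (K J : Ideal R)
    (L : Submodule S E) (hL : IsRElem R L)
    (hess : ∀ N' : Submodule S E, N' ≠ ⊥ → L ⊓ N' ≠ ⊥) :
    (annRS R L ∈ WIJ K J → gammaIJ R S K J E = ⊤) ∧
    (annRS R L ∉ WIJ K J → gammaIJ R S K J E = ⊥) ∧
    (∀ (m : Ideal R) (hm : m.IsMaximal), ¬ annRS R L ≤ m →
      Subsingleton (LocalizedModule (@Ideal.primeCompl R _ m hm.isPrime) E)) := by
  refine ⟨fun ⟨_, n, hn, hK⟩ ↦ ?_, fun hW ↦ ?_, fun m hm hLm ↦ ?_⟩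
  · refine eq_top_iff.mpr fun x _ ↦ mem_sSup_of_mem ?_ (mem_span_singleton_self x)
    exact ⟨fg_span_singleton x, Ideal.exists_pow_le_sup_of_le_radical
      (annRS_le_radical_annRS_span_singleton_of_essential hess x) hn hK⟩
  · refine eq_bot_iff.mpr <| sSup_le fun N ⟨_, n, hn, hK⟩ ↦ le_bot_iff.mpr ?_
    by_contra hN
    exact hW ⟨hL.isPrime_annRS, n, hn,
      hK.trans (sup_le_sup_right (hL.annRS_le_of_essential hess hN) J)⟩
  · obtain ⟨r, hr, hrm⟩ := SetLike.not_le_iff_exists.mp hLm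
    refine LocalizedModule.subsingleton_iff.mpr fun x ↦ ?_
    obtain ⟨n, hn⟩ := exists_pow_smul_eq_zero_of_essential hess hr x
    exact ⟨r ^ n, pow_mem hrm n, hn⟩

/-- Let `L` be an `R`-elementary `S`-submodule of an injective `S`-module `E` in which it
is essential (so `E` is an injective hull of `L`), and set `p := Ann_R(L)`. Then:
(a) if `p ∈ W(K,J)` then `Γ_{K,J}(E) = E`; (b) if `p ∉ W(K,J)` then `Γ_{K,J}(E) = 0`;
(c) if `m` is a maximal ideal of `R` not containing `p`, then `E_m = 0`. -/
theorem gammaIJ_injective_hull_of_elementary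
    (R S E : Type*) [CommRing R] [IsNoetherianRing R] [Ring S] [IsNoetherianRing S]
    [Algebra R S] [AddCommGroup E] [Module S E] [Module R E] [IsScalarTower R S E]
    (K J : Ideal R) (hE : Module.Injective S E)
    (L : Submodule S E) (hL : IsRElem R L)
    (hess : ∀ N' : Submodule S E, N' ≠ ⊥ → L ⊓ N' ≠ ⊥) :
    (annRS R L ∈ WIJ K J → gammaIJ R S K J E = ⊤) ∧
    (annRS R L ∉ WIJ K J → gammaIJ R S K J E = ⊥) ∧
    (∀ (m : Ideal R) (hm : m.IsMaximal), ¬ annRS R L ≤ m →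
      Subsingleton (LocalizedModule (@Ideal.primeCompl R _ m hm.isPrime) E)) :=
  gammaIJ_injective_hull_of_elementary_general R S E K J L hL hess
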